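/- Let 𝒢 be a finite collection of triangles in 𝔗, maximal with respect to inclusion, and let G be their union. Then for every k ≥ 1, the set Ω_k of points belonging to exactly k triangles of 𝒢 satisfies |Ω_k| ≤ 2^{2−k} |G|. -/

import Mathlib

open scoped ENNReal NNReal
open Set

/-- A locally finite tree presented via the data induced by a fixed geodesic ray `ω`:
a predecessor map `pred`, a height (Busemann) function `ht` increasing by one along `pred`,
finite successor sets, and connectedness (any two vertices have a common ancestor). -/
structure TreeData (V : Type*) where
  pred : V → V
  ht : V → ℤ
  ht_pred : ∀ x, ht (pred x) = ht x + 1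
  fiber_finite : ∀ x, {y | pred y = x}.Finite
  connected : ∀ x y, ∃ k l : ℕ, pred^[k] x = pred^[l] y

namespace TreeData

variable {V : Type*}

/-- The set of successors of a vertex. -/
def succs (t : TreeData V) (x : V) : Set V := {y | t.pred y = x}

/-- Every vertex has at least 3 neighbours, i.e. at least 2 successors. -/
def Thick (t : TreeData V) : Prop := ∀ x, 2 ≤ (t.succs x).ncard

/-- Homogeneous tree `𝔗_b`: every vertex has exactly `b+1` neighbours, i.e. `b` successors. -/
def Homog (t : TreeData V) (b : ℕ) : Prop := ∀ x, (t.succs x).ncard = b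

/-- The triangle with vertex `x` and height `R`: all descendants of `x` within `R` generations. -/
def tri (t : TreeData V) (x : V) (R : ℕ) : Set V := {y | ∃ j ≤ R, t.pred^[j] y = x}

/-- The base of the triangle with vertex `x` and height `R`: the `R`-fold successors of `x`. -/
def base (t : TreeData V) (x : V) (R : ℕ) : Set V := {y | t.pred^[R] y = x}

/-- The graph distance on the tree. -/
noncomputable def dist (t : TreeData V) (x y : V) : ℕ :=
  sInf {n | ∃ k l : ℕ, k + l = n ∧ t.pred^[k] x = t.pred^[l] y}

/-- Number of points of a set, as an element of `ℝ≥0∞` (counting measure). -/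
noncomputable def esize (E : Set V) : ℝ≥0∞ := ∑' _ : E, (1 : ℝ≥0∞)

/-- The average of `|f|` over a set, with respect to counting measure. -/
noncomputable def setAvg (t : TreeData V) (S : Set V) (f : V → ℝ) : ℝ≥0∞ :=
  (∑' y : S, (‖f y‖₊ : ℝ≥0∞)) / (S.ncard : ℝ≥0∞)

/-- The centred triangular maximal operator `𝒯`. -/
noncomputable def cmax (t : TreeData V) (f : V → ℝ) (x : V) : ℝ≥0∞ :=
  ⨆ R : ℕ, t.setAvg (t.tri x R) f

/-- The uncentred triangular maximal operator `𝒰`. -/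
noncomputable def umax (t : TreeData V) (f : V → ℝ) (x : V) : ℝ≥0∞ :=
  ⨆ (v : V) (R : ℕ) (_ : x ∈ t.tri v R), t.setAvg (t.tri v R) f

/-- The uncentred base maximal operator `ℬᵘ`. -/
noncomputable def ubmax (t : TreeData V) (f : V → ℝ) (x : V) : ℝ≥0∞ :=
  ⨆ (v : V) (R : ℕ) (_ : x ∈ t.tri v R), t.setAvg (t.base v R) f

/-- The modified triangle `T'_r(x) = T_r(x) ∪ {p^r(x)}`. -/
def mtri (t : TreeData V) (x : V) (r : ℕ) : Set V := t.tri x r ∪ {t.pred^[r] x}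

/-- The modified centred triangular maximal operator `𝒯'`. -/
noncomputable def cmax' (t : TreeData V) (f : V → ℝ) (x : V) : ℝ≥0∞ :=
  ⨆ r : ℕ, t.setAvg (t.mtri x r) f

/-- The modified uncentred triangular maximal operator `𝒰'`. -/
noncomputable def umax' (t : TreeData V) (f : V → ℝ) (x : V) : ℝ≥0∞ :=
  ⨆ (v : V) (r : ℕ) (_ : x ∈ t.mtri v r), t.setAvg (t.mtri v r) f

/-- The `ℓ^p` norm with respect to counting measure, for `p ∈ [1,∞]`. -/
noncomputable def eLp (p : ℝ≥0∞) (g : V → ℝ≥0∞) : ℝ≥0∞ :=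
  if p = ∞ then ⨆ v, g v else (∑' v, g v ^ p.toReal) ^ (1 / p.toReal)

/-- `|f|` as an `ℝ≥0∞`-valued function. -/
noncomputable def nn (f : V → ℝ) (x : V) : ℝ≥0∞ := (‖f x‖₊ : ℝ≥0∞)

/-- The point mass at `o`. -/
noncomputable def delta (o : V) : V → ℝ := ({o} : Set V).indicator fun _ => 1

end TreeData

/-!
If `x` lies in the triangle `T_R(v)` and `v` is the `j`-th ancestor of `x`, the triangle contains
every descendant of `x` down to `R - j` generations. Two triangles of `𝒢` containing `x` with the
same value of `R - j` are nested, hence equal by maximality; so the `Ω(x)` triangles through `x`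
realise `Ω(x)` distinct values, and one of them contains the whole level `Ω(x) - 1` generations
below `x`. In a tree with at least two successors per vertex that level has `≥ 2^{Ω(x)-1}` points,
and these levels are disjoint for distinct `x ∈ Ω_k`, so `2^{k-1} |Ω_k| ≤ |G|`.
-/

theorem Set.Finite.encard_mul_le_encard_biUnion {ι α : Type*} {s : Set ι} (hs : s.Finite)
    {f : ι → Set α} (hf : s.PairwiseDisjoint f) {c : ℕ∞} (hc : ∀ i ∈ s, c ≤ (f i).encard) :
    s.encard * c ≤ (⋃ i ∈ s, f i).encard := by
  lift s to Finset ι using hs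
  rw [s.finite_toSet.encard_biUnion hf, finsum_mem_coe_finset, encard_coe_eq_coe_finsetCard,
    ← nsmul_eq_mul, ← Finset.sum_const]
  exact Finset.sum_le_sum hc

theorem Set.exists_ncard_sub_one_le_of_injOn {α : Type*} {s : Set α} (hs : s.Nonempty)
    {f : α → ℕ} (hf : InjOn f s) : ∃ a ∈ s, s.ncard - 1 ≤ f a := by
  by_contra! hlt
  have hle : s.ncard ≤ (↑(Finset.range (s.ncard - 1)) : Set ℕ).ncard :=
    ncard_le_ncard_of_injOn f (fun a ha => by simpa using hlt a ha) hf (Finset.finite_toSet _)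
  rw [ncard_coe_finset, Finset.card_range] at hle
  obtain ⟨a, ha⟩ := hs
  have := hlt a ha
  omega

namespace TreeData

variable {V : Type*} (t : TreeData V)

/-- The overlapping number `Ω(x)`: how many triangles of `𝒢` contain `x`. -/
noncomputable def overlap (𝒢 : Finset (V × ℕ)) (x : V) : ℕ :=
  {a : V × ℕ | a ∈ 𝒢 ∧ x ∈ t.tri a.1 a.2}.ncard

theorem ht_iterate_pred (x : V) (n : ℕ) : t.ht (t.pred^[n] x) = t.ht x + n := by
  induction n with
  | zero => simp
  | succ n ih => rw [Function.iterate_succ_apply', t.ht_pred, ih]; push_cast; ring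

theorem ht_le_of_mem_tri {v w : V} {R : ℕ} (hw : w ∈ t.tri v R) : t.ht w ≤ t.ht v := by
  obtain ⟨j, -, rfl⟩ := hw
  rw [ht_iterate_pred]
  omega

theorem base_succ (x : V) (n : ℕ) : t.base x (n + 1) = ⋃ w ∈ t.succs x, t.base w n := by
  ext y
  simp [base, succs, Function.iterate_succ_apply']

theorem pairwiseDisjoint_base (s : Set V) (n : ℕ) : s.PairwiseDisjoint (t.base · n) :=
  pairwiseDisjoint_fiber _ s

theorem base_finite (x : V) (n : ℕ) : (t.base x n).Finite := by
  induction n generalizing x with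
  | zero => simp [base]
  | succ n ih => rw [base_succ]; exact (t.fiber_finite x).biUnion fun w _ => ih w

theorem tri_eq_biUnion_base (x : V) (R : ℕ) :
    t.tri x R = ⋃ j ∈ Finset.range (R + 1), t.base x j := by
  ext y
  simp [tri, base]

theorem tri_finite (x : V) (R : ℕ) : (t.tri x R).Finite := by
  rw [tri_eq_biUnion_base]
  exact (Finset.range (R + 1)).finite_toSet.biUnion fun j _ => t.base_finite x j

theorem two_pow_le_encard_base (hthick : t.Thick) (x : V) (n : ℕ) :
    2 ^ n ≤ (t.base x n).encard := by
  induction n generalizing x with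
  | zero => simp [base]
  | succ n ih =>
    have hsuccs : 2 ≤ (t.succs x).encard := by
      have hfin : (t.succs x).Finite := t.fiber_finite x
      rw [← hfin.cast_ncard_eq]
      exact_mod_cast hthick x
    calc (2 : ℕ∞) ^ (n + 1) = 2 * 2 ^ n := pow_succ' 2 n
      _ ≤ (t.succs x).encard * 2 ^ n := by gcongr
      _ ≤ (t.base x (n + 1)).encard := by
        rw [base_succ]
        exact (t.fiber_finite x).encard_mul_le_encard_biUnion (t.pairwiseDisjoint_base _ n)
          fun w _ => ih w

theorem tri_subset_tri {v w : V} {d R R' : ℕ} (hvw : t.pred^[d] v = w) (hR : R + d ≤ R') :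
    t.tri v R ⊆ t.tri w R' := by
  rintro y ⟨i, hi, rfl⟩
  exact ⟨d + i, by omega, by rw [Function.iterate_add_apply, hvw]⟩

theorem base_subset_tri {x v : V} {j n R : ℕ} (hxv : t.pred^[j] x = v) (hn : j + n ≤ R) :
    t.base x n ⊆ t.tri v R := by
  rintro y rfl
  exact ⟨j + n, hn, by rw [Function.iterate_add_apply, hxv]⟩

/-- Equals `a.2 - j` when `t.pred^[j] x = a.1` (`reach_of_iterate`); going through heights avoids
choosing `j`. -/
def reach (x : V) (a : V × ℕ) : ℕ := (a.2 - (t.ht a.1 - t.ht x)).toNat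

theorem reach_of_iterate {x : V} {a : V × ℕ} {j : ℕ} (hj : t.pred^[j] x = a.1) (hjR : j ≤ a.2) :
    j + t.reach x a = a.2 := by
  have := t.ht_iterate_pred x j
  rw [hj] at this
  simp only [reach]
  omega

theorem reach_injOn {𝒢 : Finset (V × ℕ)}
    (hmax : ∀ a ∈ 𝒢, ∀ b ∈ 𝒢, t.tri a.1 a.2 ⊆ t.tri b.1 b.2 → t.tri a.1 a.2 = t.tri b.1 b.2)
    (x : V) : InjOn (t.reach x) {a | a ∈ 𝒢 ∧ x ∈ t.tri a.1 a.2} := by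
  rintro a ⟨ha, ja, hja, hxa⟩ b ⟨hb, jb, hjb, hxb⟩ hab
  wlog hle : ja ≤ jb generalizing a b ja jb
  · exact (this hb jb hjb hxb ha ja hja hxa hab.symm (by omega)).symm
  have hra := t.reach_of_iterate hxa hja
  have hrb := t.reach_of_iterate hxb hjb
  have hab_tri : t.tri a.1 a.2 ⊆ t.tri b.1 b.2 := by
    refine t.tri_subset_tri (d := jb - ja) ?_ (by omega)
    rw [← hxa, ← Function.iterate_add_apply, Nat.sub_add_cancel hle, hxb]
  have hb_mem : b.1 ∈ t.tri a.1 a.2 := hmax a ha b hb hab_tri ▸ ⟨0, Nat.zero_le _, rfl⟩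
  have hht := t.ht_le_of_mem_tri hb_mem
  rw [← hxa, ← hxb, ht_iterate_pred, ht_iterate_pred] at hht
  obtain rfl : ja = jb := by omega
  exact Prod.ext (hxa.symm.trans hxb) (by omega)

theorem exists_base_overlap_subset_tri {𝒢 : Finset (V × ℕ)}
    (hmax : ∀ a ∈ 𝒢, ∀ b ∈ 𝒢, t.tri a.1 a.2 ⊆ t.tri b.1 b.2 → t.tri a.1 a.2 = t.tri b.1 b.2)
    {x : V} (hx : x ∈ ⋃ a ∈ 𝒢, t.tri a.1 a.2) :
    ∃ a ∈ 𝒢, t.base x (t.overlap 𝒢 x - 1) ⊆ t.tri a.1 a.2 := by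
  have hne : {a | a ∈ 𝒢 ∧ x ∈ t.tri a.1 a.2}.Nonempty := by
    obtain ⟨a, ha, hxa⟩ := mem_iUnion₂.1 hx
    exact ⟨a, ha, hxa⟩
  obtain ⟨a, ⟨ha, j, hj, hxa⟩, hle⟩ := exists_ncard_sub_one_le_of_injOn hne (t.reach_injOn hmax x)
  have hra := t.reach_of_iterate hxa hj
  exact ⟨a, ha, t.base_subset_tri hxa (by unfold overlap; omega)⟩

theorem encard_overlap_eq_mul_two_pow_le (hthick : t.Thick) {𝒢 : Finset (V × ℕ)}
    (hmax : ∀ a ∈ 𝒢, ∀ b ∈ 𝒢, t.tri a.1 a.2 ⊆ t.tri b.1 b.2 → t.tri a.1 a.2 = t.tri b.1 b.2)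
    (k : ℕ) :
    {x ∈ ⋃ a ∈ 𝒢, t.tri a.1 a.2 | t.overlap 𝒢 x = k}.encard * 2 ^ (k - 1) ≤
      (⋃ a ∈ 𝒢, t.tri a.1 a.2).encard := by
  set G := ⋃ a ∈ 𝒢, t.tri a.1 a.2
  have hG : G.Finite := 𝒢.finite_toSet.biUnion fun a _ => t.tri_finite a.1 a.2
  calc _ ≤ (⋃ x ∈ {x ∈ G | t.overlap 𝒢 x = k}, t.base x (k - 1)).encard :=
        (hG.subset (sep_subset _ _)).encard_mul_le_encard_biUnion (t.pairwiseDisjoint_base _ _)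
          fun x _ => t.two_pow_le_encard_base hthick x (k - 1)
    _ ≤ G.encard := by
        refine encard_le_encard (iUnion₂_subset fun x hx => ?_)
        obtain ⟨a, ha, hsub⟩ := t.exists_base_overlap_subset_tri hmax hx.1
        rw [hx.2] at hsub
        exact hsub.trans (subset_biUnion_of_mem (u := fun a => t.tri a.1 a.2) ha)

end TreeData

theorem stmt8_general {V : Type*} (t : TreeData V) (hthick : t.Thick) (𝒢 : Finset (V × ℕ))
    (hmax : ∀ a ∈ 𝒢, ∀ b ∈ 𝒢, t.tri a.1 a.2 ⊆ t.tri b.1 b.2 → t.tri a.1 a.2 = t.tri b.1 b.2)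
    (k : ℕ) :
    TreeData.esize {x ∈ ⋃ a ∈ 𝒢, t.tri a.1 a.2 |
        {a : V × ℕ | a ∈ 𝒢 ∧ x ∈ t.tri a.1 a.2}.ncard = k} ≤
      (2 : ℝ≥0∞) ^ ((2 : ℤ) - k) * TreeData.esize (⋃ a ∈ 𝒢, t.tri a.1 a.2) := by
  rw [TreeData.esize, TreeData.esize, ENNReal.tsum_set_one, ENNReal.tsum_set_one]
  have hcount := ENat.toENNReal_le.2 (t.encard_overlap_eq_mul_two_pow_le hthick hmax k)
  push_cast at hcount
  have hpow : 1 ≤ (2 : ℝ≥0∞) ^ (k - 1) * 2 ^ ((2 : ℤ) - k) := by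
    rw [← zpow_natCast, ← ENNReal.zpow_add two_ne_zero ENNReal.ofNat_ne_top]
    simpa using ENNReal.zpow_le_of_le one_le_two (a := 0) (by omega)
  calc _ ≤ _ * ((2 : ℝ≥0∞) ^ (k - 1) * 2 ^ ((2 : ℤ) - k)) := le_mul_of_one_le_right' hpow
    _ = _ * 2 ^ (k - 1) * 2 ^ ((2 : ℤ) - k) := (mul_assoc _ _ _).symm
    _ ≤ _ := by rw [mul_comm (2 ^ _)]; gcongr; exact hcount

/-- For a finite collection `𝒢` of maximal triangles with union `G`,
the set `Ω_k` of points lying in exactly `k` triangles of `𝒢` satisfies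
`|Ω_k| ≤ 2^{2-k} |G|`. -/
theorem stmt8 {V : Type*} (t : TreeData V) (hthick : t.Thick) (𝒢 : Finset (V × ℕ))
    (hmax : ∀ a ∈ 𝒢, ∀ b ∈ 𝒢, t.tri a.1 a.2 ⊆ t.tri b.1 b.2 → t.tri a.1 a.2 = t.tri b.1 b.2)
    (k : ℕ) (hk : 1 ≤ k) :
    TreeData.esize {x ∈ ⋃ a ∈ 𝒢, t.tri a.1 a.2 |
        {a : V × ℕ | a ∈ 𝒢 ∧ x ∈ t.tri a.1 a.2}.ncard = k} ≤
      (2 : ℝ≥0∞) ^ ((2 : ℤ) - k) * TreeData.esize (⋃ a ∈ 𝒢, t.tri a.1 a.2) :=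
  stmt8_general t hthick 𝒢 hmax k
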